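/- Let a > 0 and let p : [a, ∞) → (0, ∞) satisfy p(L)/L → 1 as L → ∞. Then there exist b > 0 and a function q : [b, ∞) → [a, ∞) such that p(q(L)) ≤ L for all L ≥ b and p(q(L))/L → 1 as L → ∞. -/
import Mathlib


theorem stmt1 (a : ℝ) (ha : 0 < a) (p : ℝ → ℝ) (hp : ∀ L, a ≤ L → 0 < p L)
    (hasy : Filter.Tendsto (fun L => p L / L) Filter.atTop (nhds 1)) :
    ∃ b > (0 : ℝ), ∃ q : ℝ → ℝ, (∀ L, b ≤ L → a ≤ q L) ∧ (∀ L, b ≤ L → p (q L) ≤ L) ∧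
      Filter.Tendsto (fun L => p (q L) / L) Filter.atTop (nhds 1) := by
  classical
  set A : ℝ → Set ℝ := fun L => {x | a ≤ x ∧ x ≤ L ∧ p x ≤ L} with hA
  set s : ℝ → ℝ := fun L => sSup (p '' A L) with hs
  set b : ℝ := max a (p a) with hb
  have hb0 : 0 < b := lt_of_lt_of_le ha (le_max_left _ _)
  have hAne : ∀ L, b ≤ L → a ∈ A L := fun L hL =>
    ⟨le_refl a, le_trans (le_max_left _ _) hL, le_trans (le_max_right _ _) hL⟩
  have hbdd : ∀ L, BddAbove (p '' A L) := by
    intro L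
    exact ⟨L, by rintro y ⟨x, hx, rfl⟩; exact hx.2.2⟩
  have hcond : ∀ L, b ≤ L → ∃ x, x ∈ A L ∧ s L - 1 < p x := by
    intro L hL
    have hne : (p '' A L).Nonempty := ⟨p a, a, hAne L hL, rfl⟩
    obtain ⟨y, hy, hy'⟩ := exists_lt_of_lt_csSup hne (by linarith : s L - 1 < s L)
    obtain ⟨x, hx, rfl⟩ := hy
    exact ⟨x, hx, hy'⟩
  set q : ℝ → ℝ := fun L => if h : ∃ x, x ∈ A L ∧ s L - 1 < p x then h.choose else a with hq
  have hqmem : ∀ L, b ≤ L → q L ∈ A L ∧ s L - 1 < p (q L) := by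
    intro L hL
    have h := hcond L hL
    simp only [hq, dif_pos h]
    exact h.choose_spec
  refine ⟨b, hb0, q, ?_, ?_, ?_⟩
  · intro L hL; exact (hqmem L hL).1.1
  · intro L hL; exact (hqmem L hL).1.2.2
  · rw [Metric.tendsto_atTop] at hasy ⊢
    intro ε hε
    obtain ⟨M, hM⟩ := hasy (ε/4) (by linarith)
    set C := max (max M a) 1 with hC
    refine ⟨max (max b ((1 + ε/4) * C)) (4/ε), ?_⟩
    intro L hL
    have hLb : b ≤ L := le_trans (le_trans (le_max_left _ _) (le_max_left _ _)) hL
    have hLC : (1 + ε/4) * C ≤ L := le_trans (le_trans (le_max_right _ _) (le_max_left _ _)) hL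
    have hL4 : 4/ε ≤ L := le_trans (le_max_right _ _) hL
    have hLpos : 0 < L := lt_of_lt_of_le hb0 hLb
    set x := L / (1 + ε/4) with hx
    have h1ε : (0:ℝ) < 1 + ε/4 := by linarith
    have hxC : C ≤ x := (le_div_iff₀ h1ε).mpr (by
      have := mul_comm C (1 + ε/4); linarith)
    have hx1 : (1:ℝ) ≤ x := le_trans (le_max_right _ _) hxC
    have hxa : a ≤ x := le_trans (le_trans (le_max_right _ _) (le_max_left _ _)) hxC
    have hxM : M ≤ x := le_trans (le_trans (le_max_left _ _) (le_max_left _ _)) hxC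
    have hxpos : (0:ℝ) < x := lt_of_lt_of_le one_pos hx1
    have hxL : x ≤ L := div_le_self hLpos.le (by linarith)
    have hdx := hM x hxM
    rw [Real.dist_eq, abs_lt] at hdx
    have hxmul : (1 + ε/4) * x = L := by
      rw [hx, mul_div_cancel₀ _ (ne_of_gt h1ε)]
    have hpxu : p x ≤ L := by
      have : p x / x < 1 + ε/4 := by linarith [hdx.2]
      have := (div_lt_iff₀ hxpos).mp this
      nlinarith
    have hpxl : (1 - ε/2) * L < p x := by
      have : 1 - ε/4 < p x / x := by linarith [hdx.1]
      have h' := (lt_div_iff₀ hxpos).mp this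
      nlinarith
    have hxA : x ∈ A L := ⟨hxa, hxL, hpxu⟩
    have hsL : p x ≤ s L := le_csSup (hbdd L) ⟨x, hxA, rfl⟩
    obtain ⟨hqA, hqlow⟩ := hqmem L hLb
    have h4 : (4:ℝ) ≤ ε * L := by
      rw [div_le_iff₀ hε] at hL4; linarith [mul_comm L ε]
    have h2 : (1 - ε) * L < p (q L) := by nlinarith
    have h1 : p (q L) ≤ L := hqA.2.2
    rw [Real.dist_eq, abs_lt]
    constructor
    · have := (lt_div_iff₀ hLpos).mpr h2
      linarith
    · have := (div_le_one hLpos).mpr h1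
      linarith
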